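/- arXiv:1301.2650 — 4 statements merged into one kernel-verified Lean document; each statement's English description precedes it below -/
import Mathlib

section
/- Let A be an n×n complex matrix and σ a complex scalar (an arbitrary shift). Suppose Ŵ ∈ ℂ^{n×(m+1)}, V̂ ∈ ℂ^{n×m}, G̃ ∈ ℂ^{(m+1)×m}, EF ∈ ℂ^{n×k} with k ≤ m, and let P = [EF 0] ∈ ℂ^{n×m} denote the matrix whose first k columns are those of EF and whose remaining m−k columns are zero. Assume: (i) the perturbed Arnoldi-like relation (A + σI) V̂ = Ŵ G̃ + σ P holds; (ii) the base residual r₀ ∈ ℂⁿ satisfies r₀ = ‖r₀‖ Ŵ e_{k+1}, where e_{k+1} is the (k+1)-st standard basis vector of ℂ^{m+1}; (iii) the shifted initial residual satisfies r₀^{(σ)} = β̃₀ r₀ + w for some β̃₀ ∈ ℂ and w ∈ ℂⁿ, where r₀^{(σ)} = b − (A + σI) x₀^{(σ)}; (iv) the vector ỹ ∈ ℂᵐ and scalar β̃ₘ ∈ ℂ solve the approximate collinearity system G̃ ỹ + β̃ₘ z = β̃₀ ‖r₀‖ e_{k+1} for a vector z ∈ ℂ^{m+1}; (v) the final base residual is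 rₘ = Ŵ z. Define the shifted approximation xₘ^{(σ)} = x₀^{(σ)} + V̂ ỹ. Then the resulting shifted residual satisfies b − (A + σI) xₘ^{(σ)} = β̃ₘ rₘ − σ · EF · (ỹ)_{1:k} + w, where (ỹ)_{1:k} ∈ ℂᵏ is the vector of the first k components of ỹ. -/
open Matrix

/-- The Euclidean (ℓ²) norm of a complex vector. -/
noncomputable def euclNorm {n : ℕ} (v : Fin n → ℂ) : ℝ :=
  ‖(WithLp.equiv 2 (Fin n → ℂ)).symm v‖

/-- Theorem (shifted residual relation for the approximate collinearity condition).
Given the perturbed Arnoldi-like relation `(A + σI) V̂ = Ŵ G̃ + σ [EF 0]`, the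
initial relations `r₀ = ‖r₀‖ Ŵ e_{k+1}` and `r₀^{(σ)} = β̃₀ r₀ + w`, a solution
`(ỹ, β̃ₘ)` of the approximate collinearity system `G̃ ỹ + β̃ₘ z = β̃₀ ‖r₀‖ e_{k+1}`,
and `rₘ = Ŵ z`, the shifted approximation `xₘ^{(σ)} = x₀^{(σ)} + V̂ ỹ` has residual
`β̃ₘ rₘ − σ EF (ỹ)_{1:k} + w`. -/
theorem shifted_residual_relation
    {n m k : ℕ} (hk : k ≤ m)
    (A : Matrix (Fin n) (Fin n) ℂ) (σ : ℂ)
    (W : Matrix (Fin n) (Fin (m + 1)) ℂ)      -- Ŵ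
    (V : Matrix (Fin n) (Fin m) ℂ)            -- V̂
    (G : Matrix (Fin (m + 1)) (Fin m) ℂ)      -- G̃^{(σ)}
    (EF : Matrix (Fin n) (Fin k) ℂ)
    (P : Matrix (Fin n) (Fin m) ℂ)            -- [EF 0]
    (hP : P = Matrix.of fun i (j : Fin m) =>
      if h : (j : ℕ) < k then EF i ⟨j, h⟩ else 0)
    (b x0σ r0 r0σ rm w : Fin n → ℂ)
    (β0 βm : ℂ) (y : Fin m → ℂ) (z : Fin (m + 1) → ℂ)
    -- (i) perturbed Arnoldi-like relation
    (hArnoldi : (A + σ • (1 : Matrix (Fin n) (Fin n) ℂ)) * V = W * G + σ • P)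
    -- (ii) r₀ = ‖r₀‖ Ŵ e_{k+1}
    (hr0 : r0 = (euclNorm r0 : ℂ) •
      W.mulVec (Pi.single (⟨k, Nat.lt_succ_of_le hk⟩ : Fin (m + 1)) (1 : ℂ)))
    -- (iii) shifted initial residual: approximate collinearity
    (hr0σ : r0σ = b - (A + σ • (1 : Matrix (Fin n) (Fin n) ℂ)).mulVec x0σ)
    (hcollin : r0σ = β0 • r0 + w)
    -- (iv) approximate collinearity system
    (hsys : G.mulVec y + βm • z
      = (β0 * (euclNorm r0 : ℂ)) •
        ((Pi.single (⟨k, Nat.lt_succ_of_le hk⟩ : Fin (m + 1)) (1 : ℂ)) :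
          Fin (m + 1) → ℂ))
    -- (v) final base residual
    (hrm : rm = W.mulVec z) :
    b - (A + σ • (1 : Matrix (Fin n) (Fin n) ℂ)).mulVec (x0σ + V.mulVec y)
      = βm • rm
        - σ • EF.mulVec (fun i : Fin k => y ⟨i, lt_of_lt_of_le i.2 hk⟩)
        + w := by
  have hPy : P.mulVec y
      = EF.mulVec (fun i : Fin k => y ⟨i, lt_of_lt_of_le i.2 hk⟩) := by
    funext i
    simp only [Matrix.mulVec, dotProduct, hP, Matrix.of_apply]
    have h1 : ∑ x : Fin m, (if h : (x : ℕ) < k then EF i ⟨x, h⟩ else 0) * y x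
        = ∑ x ∈ Finset.univ.map ⟨Fin.castLE hk, Fin.castLE_injective hk⟩,
          (if h : (x : ℕ) < k then EF i ⟨x, h⟩ else 0) * y x := by
      refine (Finset.sum_subset (Finset.subset_univ _) ?_).symm
      intro x _ hx
      have hxk : ¬ (x : ℕ) < k := by
        intro h
        exact hx (Finset.mem_map.mpr ⟨⟨x, h⟩, Finset.mem_univ _, by
          ext; simp⟩)
      rw [dif_neg hxk, zero_mul]
    rw [h1, Finset.sum_map]
    apply Finset.sum_congr rfl
    intro j _
    simp only [Function.Embedding.coeFn_mk, Fin.coe_castLE, Fin.is_lt, dite_true,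
      Fin.eta]
    rfl
  have hMVy : (A + σ • (1 : Matrix (Fin n) (Fin n) ℂ)).mulVec (V.mulVec y)
      = W.mulVec (G.mulVec y) + σ • P.mulVec y := by
    rw [Matrix.mulVec_mulVec, hArnoldi, Matrix.add_mulVec, ← Matrix.mulVec_mulVec,
      Matrix.smul_mulVec]
  have hGy : G.mulVec y = (β0 * (euclNorm r0 : ℂ)) •
      ((Pi.single (⟨k, Nat.lt_succ_of_le hk⟩ : Fin (m + 1)) (1 : ℂ)) :
        Fin (m + 1) → ℂ) - βm • z := by
    rw [← hsys]; abel
  have hWGy : W.mulVec (G.mulVec y) = β0 • r0 - βm • rm := by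
    rw [hGy, Matrix.mulVec_sub, Matrix.mulVec_smul, Matrix.mulVec_smul, ← hrm,
      mul_smul, ← hr0]
  have hb : b = β0 • r0 + w + (A + σ • (1 : Matrix (Fin n) (Fin n) ℂ)).mulVec x0σ := by
    rw [← hcollin, hr0σ]; abel
  rw [Matrix.mulVec_add, hMVy, hPy, hWGy, hb]
  abel
end

section
/- Under the hypotheses of the preceding theorem — namely, with (A + σI) V̂ = Ŵ G̃ + σ[EF 0], r₀ = ‖r₀‖ Ŵ e_{k+1}, r₀^{(σ)} = β̃₀ r₀ + w, the approximate collinearity system G̃ ỹ + β̃ₘ z = β̃₀ ‖r₀‖ e_{k+1}, rₘ = Ŵ z, and xₘ^{(σ)} = x₀^{(σ)} + V̂ ỹ — the shifted residual r̃ₘ^{(σ)} = b − (A + σI) xₘ^{(σ)} satisfies the norm inequality ‖r̃ₘ^{(σ)}‖ ≤ |β̃ₘ| · ‖rₘ‖ + |σ| · ‖EF‖ · ‖(ỹ)_{1:k}‖ + ‖w‖, where ‖EF‖ denotes the operator norm of EF induced by the Euclidean norms on ℂᵏ and ℂⁿ. -/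
open Matrix

/-- The operator norm of a matrix, induced by the Euclidean norms. -/
noncomputable def euclOpNorm {n k : ℕ} (M : Matrix (Fin n) (Fin k) ℂ) : ℝ :=
  ‖(Matrix.toEuclideanLin M).toContinuousLinearMap‖

lemma zeroPadCols_mulVec {α : Type*} [NonUnitalNonAssocSemiring α] {n m k : ℕ} (hk : k ≤ m)
    (E : Matrix (Fin n) (Fin k) α) (y : Fin m → α) :
    (Matrix.of fun i (j : Fin m) => if h : (j : ℕ) < k then E i ⟨j, h⟩ else 0) *ᵥ y
      = E *ᵥ fun i : Fin k => y ⟨i, i.2.trans_le hk⟩ := by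
  funext i
  refine (Fintype.sum_of_injective (Fin.castLE hk) (Fin.castLE_injective hk) _ _ ?_ ?_).symm
  · rintro j hj
    have hjk : ¬ (j : ℕ) < k := fun h => hj ⟨⟨j, h⟩, rfl⟩
    simp [hjk]
  · intro j
    simp [Fin.castLE]

lemma shifted_residual_eq {R ι κ μ : Type*} [CommRing R] [Fintype ι] [Fintype κ] [Fintype μ]
    (M : Matrix ι ι R) (V : Matrix ι κ R) (W : Matrix ι μ R) (G : Matrix μ κ R)
    (P : Matrix ι κ R) (σ ρ β0 βm : R) (e : μ → R) (y : κ → R) (z : μ → R)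
    (b x0 r0 w : ι → R)
    (hArnoldi : M * V = W * G + σ • P) (hr0 : r0 = ρ • W *ᵥ e)
    (hinit : b - M *ᵥ x0 = β0 • r0 + w) (hsys : G *ᵥ y + βm • z = (β0 * ρ) • e) :
    b - M *ᵥ (x0 + V *ᵥ y) = βm • W *ᵥ z - σ • P *ᵥ y + w := by
  have hGy : G *ᵥ y = (β0 * ρ) • e - βm • z := eq_sub_of_add_eq hsys
  have hMVy : M *ᵥ (V *ᵥ y) = β0 • r0 - βm • W *ᵥ z + σ • P *ᵥ y := by
    rw [mulVec_mulVec, hArnoldi, add_mulVec, ← mulVec_mulVec, hGy, mulVec_sub, mulVec_smul,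
      mulVec_smul, smul_mulVec, mul_smul, ← hr0]
  rw [mulVec_add, sub_add_eq_sub_sub, hinit, hMVy]
  abel

lemma euclNorm_add_le {n : ℕ} (u v : Fin n → ℂ) :
    euclNorm (u + v) ≤ euclNorm u + euclNorm v :=
  norm_add_le _ _

lemma euclNorm_sub_le {n : ℕ} (u v : Fin n → ℂ) :
    euclNorm (u - v) ≤ euclNorm u + euclNorm v :=
  norm_sub_le _ _

lemma euclNorm_smul {n : ℕ} (c : ℂ) (v : Fin n → ℂ) :
    euclNorm (c • v) = ‖c‖ * euclNorm v :=
  norm_smul c ((WithLp.equiv 2 _).symm v)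

lemma euclNorm_mulVec_le {n k : ℕ} (M : Matrix (Fin n) (Fin k) ℂ) (v : Fin k → ℂ) :
    euclNorm (M *ᵥ v) ≤ euclOpNorm M * euclNorm v := by
  simpa [euclNorm, euclOpNorm] using
    (Matrix.toEuclideanLin M).toContinuousLinearMap.le_opNorm ((WithLp.equiv 2 _).symm v)

/-- Theorem (shifted residual relation for the approximate collinearity condition).
Given the perturbed Arnoldi-like relation `(A + σI) V̂ = Ŵ G̃ + σ [EF 0]`, the
initial relations `r₀ = ‖r₀‖ Ŵ e_{k+1}` and `r₀^{(σ)} = β̃₀ r₀ + w`, a solution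
`(ỹ, β̃ₘ)` of the approximate collinearity system `G̃ ỹ + β̃ₘ z = β̃₀ ‖r₀‖ e_{k+1}`,
and `rₘ = Ŵ z`, the shifted approximation `xₘ^{(σ)} = x₀^{(σ)} + V̂ ỹ` has residual
norm bounded by `|β̃ₘ| ‖rₘ‖ + |σ| ‖EF‖ ‖(ỹ)_{1:k}‖ + ‖w‖`. -/
theorem shifted_residual_norm_bound
    {n m k : ℕ} (hk : k ≤ m)
    (A : Matrix (Fin n) (Fin n) ℂ) (σ : ℂ)
    (W : Matrix (Fin n) (Fin (m + 1)) ℂ)      -- Ŵ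
    (V : Matrix (Fin n) (Fin m) ℂ)            -- V̂
    (G : Matrix (Fin (m + 1)) (Fin m) ℂ)      -- G̃^{(σ)}
    (EF : Matrix (Fin n) (Fin k) ℂ)
    (P : Matrix (Fin n) (Fin m) ℂ)            -- [EF 0]
    (hP : P = Matrix.of fun i (j : Fin m) =>
      if h : (j : ℕ) < k then EF i ⟨j, h⟩ else 0)
    (b x0σ r0 r0σ rm w : Fin n → ℂ)
    (β0 βm : ℂ) (y : Fin m → ℂ) (z : Fin (m + 1) → ℂ)
    -- (i) perturbed Arnoldi-like relation
    (hArnoldi : (A + σ • (1 : Matrix (Fin n) (Fin n) ℂ)) * V = W * G + σ • P)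
    -- (ii) r₀ = ‖r₀‖ Ŵ e_{k+1}
    (hr0 : r0 = (euclNorm r0 : ℂ) •
      W.mulVec (Pi.single (⟨k, Nat.lt_succ_of_le hk⟩ : Fin (m + 1)) (1 : ℂ)))
    -- (iii) shifted initial residual: approximate collinearity
    (hr0σ : r0σ = b - (A + σ • (1 : Matrix (Fin n) (Fin n) ℂ)).mulVec x0σ)
    (hcollin : r0σ = β0 • r0 + w)
    -- (iv) approximate collinearity system
    (hsys : G.mulVec y + βm • z
      = (β0 * (euclNorm r0 : ℂ)) •
        ((Pi.single (⟨k, Nat.lt_succ_of_le hk⟩ : Fin (m + 1)) (1 : ℂ)) :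
          Fin (m + 1) → ℂ))
    -- (v) final base residual
    (hrm : rm = W.mulVec z) :
    euclNorm (b - (A + σ • (1 : Matrix (Fin n) (Fin n) ℂ)).mulVec (x0σ + V.mulVec y))
      ≤ ‖βm‖ * euclNorm rm
        + ‖σ‖ * euclOpNorm EF
            * euclNorm (fun i : Fin k => y ⟨i, lt_of_lt_of_le i.2 hk⟩)
        + euclNorm w := by
  have hinit : b - (A + σ • (1 : Matrix (Fin n) (Fin n) ℂ)) *ᵥ x0σ = β0 • r0 + w := by
    rw [← hr0σ, hcollin]
  rw [shifted_residual_eq _ V W G P σ _ β0 βm _ y z b x0σ r0 w hArnoldi hr0 hinit hsys, ← hrm,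
    hP, zeroPadCols_mulVec hk]
  calc _ ≤ euclNorm (βm • rm) + euclNorm (σ • EF *ᵥ fun i : Fin k => y ⟨i, i.2.trans_le hk⟩)
          + euclNorm w :=
        (euclNorm_add_le _ _).trans (by gcongr; exact euclNorm_sub_le _ _)
    _ ≤ _ := by
        rw [euclNorm_smul, euclNorm_smul, mul_assoc]
        gcongr
        exact euclNorm_mulVec_le _ _
end

section
/- Let A be an n×n complex matrix and σ ∈ ℂ a shift such that A + σI is invertible. Let U ∈ ℂ^{n×k}, V ∈ ℂ^{n×(m−k)}, Ŵ ∈ ℂ^{n×(m+1)}, G̃ ∈ ℂ^{(m+1)×m}, EF ∈ ℂ^{n×k}, and suppose the perturbed Arnoldi-like relation (A + σI)[U V] = Ŵ G̃ + σ[EF 0] holds, where [U V] ∈ ℂ^{n×m} is the block matrix with first k columns U and last m−k columns V, and [EF 0] ∈ ℂ^{n×m} has first k columns EF and remaining columns zero. Define U^{(σ)} = U − σ (A + σI)^{-1} EF. Then the exact Arnoldi-like relation (A + σI)[U^{(σ)} V] = Ŵ G̃ holds. -/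
open Matrix

/-- For `X ∈ ℂ^{n×k}` and `Y ∈ ℂ^{n×(m−k)}` (with `k ≤ m`), the block matrix
`[X Y] ∈ ℂ^{n×m}` whose first `k` columns are those of `X` and whose last
`m − k` columns are those of `Y`. -/
def blockCols {n m k : ℕ} (hk : k ≤ m)
    (X : Matrix (Fin n) (Fin k) ℂ) (Y : Matrix (Fin n) (Fin (m - k)) ℂ) :
    Matrix (Fin n) (Fin m) ℂ :=
  Matrix.of fun i (j : Fin m) =>
    if h : (j : ℕ) < k then X i ⟨j, h⟩
    else Y i ⟨(j : ℕ) - k, by omega⟩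

lemma blockCols_sub_left {n m k : ℕ} (hk : k ≤ m)
    (X Z : Matrix (Fin n) (Fin k) ℂ) (Y : Matrix (Fin n) (Fin (m - k)) ℂ) :
    blockCols hk (X - Z) Y = blockCols hk X Y - blockCols hk Z 0 := by
  ext i j
  simp only [blockCols, Matrix.of_apply, Matrix.sub_apply]
  split <;> simp

lemma mul_blockCols {n m k : ℕ} (hk : k ≤ m)
    (M : Matrix (Fin n) (Fin n) ℂ)
    (X : Matrix (Fin n) (Fin k) ℂ) (Y : Matrix (Fin n) (Fin (m - k)) ℂ) :
    M * blockCols hk X Y = blockCols hk (M * X) (M * Y) := by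
  ext i j
  simp only [blockCols, Matrix.of_apply, Matrix.mul_apply]
  split <;> rfl

lemma smul_blockCols {n m k : ℕ} (hk : k ≤ m) (c : ℂ)
    (X : Matrix (Fin n) (Fin k) ℂ) (Y : Matrix (Fin n) (Fin (m - k)) ℂ) :
    c • blockCols hk X Y = blockCols hk (c • X) (c • Y) := by
  ext i j
  simp only [blockCols, Matrix.of_apply, Matrix.smul_apply]
  split <;> rfl

/-- If `A + σI` is invertible and the perturbed Arnoldi-like relation
`(A + σI)[U V] = Ŵ G̃ + σ[EF 0]` holds, then with
`U^{(σ)} = U − σ (A + σI)⁻¹ EF` we obtain the exact Arnoldi-like relation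
`(A + σI)[U^{(σ)} V] = Ŵ G̃`. -/
theorem exact_arnoldi_relation
    {n m k : ℕ} (hk : k ≤ m)
    (A : Matrix (Fin n) (Fin n) ℂ) (σ : ℂ)
    (hinv : IsUnit (A + σ • (1 : Matrix (Fin n) (Fin n) ℂ)))
    (U : Matrix (Fin n) (Fin k) ℂ)
    (V : Matrix (Fin n) (Fin (m - k)) ℂ)
    (W : Matrix (Fin n) (Fin (m + 1)) ℂ)      -- Ŵ
    (G : Matrix (Fin (m + 1)) (Fin m) ℂ)      -- G̃^{(σ)}
    (EF : Matrix (Fin n) (Fin k) ℂ)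
    -- perturbed Arnoldi-like relation
    (hArnoldi : (A + σ • (1 : Matrix (Fin n) (Fin n) ℂ)) * blockCols hk U V
      = W * G + σ • blockCols hk EF (0 : Matrix (Fin n) (Fin (m - k)) ℂ))
    (Uσ : Matrix (Fin n) (Fin k) ℂ)
    (hUσ : Uσ = U - σ • ((A + σ • (1 : Matrix (Fin n) (Fin n) ℂ))⁻¹ * EF)) :
    (A + σ • (1 : Matrix (Fin n) (Fin n) ℂ)) * blockCols hk Uσ V = W * G := by
  subst hUσ
  have hB := hinv
  have hcan : (A + σ • (1 : Matrix (Fin n) (Fin n) ℂ)) *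
      ((A + σ • (1 : Matrix (Fin n) (Fin n) ℂ))⁻¹ * EF) = EF := by
    rw [← Matrix.mul_assoc, Matrix.mul_nonsing_inv _
      ((Matrix.isUnit_iff_isUnit_det _).mp hinv), Matrix.one_mul]
  rw [blockCols_sub_left, Matrix.mul_sub, hArnoldi, mul_blockCols,
    Matrix.mul_smul, hcan]
  have : (A + σ • (1 : Matrix (Fin n) (Fin n) ℂ)) * (0 : Matrix (Fin n) (Fin (m-k)) ℂ) = 0 :=
    Matrix.mul_zero _
  rw [this, smul_blockCols, smul_zero]
  abel
end

section
/- Let A be an n×n complex matrix, σ ∈ ℂ, and U, C ∈ ℂ^{n×k} with AU = C. Let b ∈ ℂⁿ, and let x, x^{(σ)} ∈ ℂⁿ have residuals r = b − Ax and r^{(σ)} = b − (A + σI)x^{(σ)} satisfying r^{(σ)} = β r + w for some β ∈ ℂ and w ∈ ℂⁿ. Perform the updates x' = x + U C* r and x^{(σ)}' = x^{(σ)} + U C* r^{(σ)}. Then the updated base residual is b − A x' = r − C C* r, and the updated shifted residual satisfies b − (A + σI) x^{(σ)}' = β (r − C C* r) + (w − C C* w) − σ U C* r^{(σ)}; in particular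 the new discrepancy vector from collinearity with the new base residual is (I − C C*) w − σ U C* r^{(σ)}. -/
open Matrix

/-- If the base residual `r = b − Ax` and shifted residual
`r^{(σ)} = b − (A + σI)x^{(σ)}` satisfy `r^{(σ)} = β r + w`, then after the
updates `x' = x + U C* r` and `x^{(σ)}' = x^{(σ)} + U C* r^{(σ)}` (with
`AU = C`), the new base residual is `r − C C* r`, the new shifted residual is
`β (r − C C* r) + (w − C C* w) − σ U C* r^{(σ)}`, and hence the new discrepancy
from collinearity with the new base residual is
`(I − C C*) w − σ U C* r^{(σ)}`. -/
theorem updated_residuals_and_discrepancy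
    {n k : ℕ} (A : Matrix (Fin n) (Fin n) ℂ) (σ : ℂ)
    (U C : Matrix (Fin n) (Fin k) ℂ) (hAU : A * U = C)
    (b x xσ r rσ w : Fin n → ℂ) (β : ℂ)
    (hr : r = b - A.mulVec x)
    (hrσ : rσ = b - (A + σ • (1 : Matrix (Fin n) (Fin n) ℂ)).mulVec xσ)
    (hcollin : rσ = β • r + w)
    (x' xσ' : Fin n → ℂ)
    (hx' : x' = x + (U * Cᴴ).mulVec r)
    (hxσ' : xσ' = xσ + (U * Cᴴ).mulVec rσ) :
    b - A.mulVec x' = r - (C * Cᴴ).mulVec r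
    ∧ b - (A + σ • (1 : Matrix (Fin n) (Fin n) ℂ)).mulVec xσ'
        = β • (r - (C * Cᴴ).mulVec r) + (w - (C * Cᴴ).mulVec w)
          - σ • (U * Cᴴ).mulVec rσ
    ∧ (b - (A + σ • (1 : Matrix (Fin n) (Fin n) ℂ)).mulVec xσ')
        - β • (b - A.mulVec x')
        = (w - (C * Cᴴ).mulVec w) - σ • (U * Cᴴ).mulVec rσ := by
  have hmul : (A + σ • (1 : Matrix (Fin n) (Fin n) ℂ)) * (U * Cᴴ)
      = C * Cᴴ + σ • (U * Cᴴ) := by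
    rw [add_mul, smul_mul, one_mul, ← Matrix.mul_assoc, hAU]
  have h1 : b - A.mulVec x' = r - (C * Cᴴ).mulVec r := by
    rw [hx', mulVec_add, mulVec_mulVec, ← Matrix.mul_assoc, hAU, hr]
    abel
  have h2 : b - (A + σ • (1 : Matrix (Fin n) (Fin n) ℂ)).mulVec xσ'
      = rσ - (C * Cᴴ).mulVec rσ - σ • (U * Cᴴ).mulVec rσ := by
    rw [hxσ', mulVec_add, mulVec_mulVec, hmul, add_mulVec (C * Cᴴ), smul_mulVec, hrσ]
    abel
  have h2' : b - (A + σ • (1 : Matrix (Fin n) (Fin n) ℂ)).mulVec xσ'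
      = β • (r - (C * Cᴴ).mulVec r) + (w - (C * Cᴴ).mulVec w)
        - σ • (U * Cᴴ).mulVec rσ := by
    rw [h2, hcollin, mulVec_add, mulVec_smul]
    module
  refine ⟨h1, h2', ?_⟩
  rw [h1, h2']
  abel
end
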